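/- Let A be a commutative K-algebra, R a K-subalgebra of D(A) with A ⊆ R, and R_i := R ∩ D(A)_i for i ≥ 0. If 𝔞 is a nonzero two-sided ideal of R, then 𝔞₀ := 𝔞 ∩ A is a nonzero ideal of A such that [R_1, 𝔞₀] ⊆ 𝔞₀ and R𝔞₀R ∩ A = 𝔞₀. Moreover the condition [R_1, 𝔞₀] ⊆ 𝔞₀ is equivalent to [D_R, 𝔞₀] ⊆ 𝔞₀, where D_R := R_1 ∩ Der_K(A), i.e. δ(𝔞₀) ⊆ 𝔞₀ for all δ ∈ D_R. -/
import Mathlib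


/-- `DO K A i` is the set of differential operators on `A` of order `≤ i`:
`D(A)_i = {u ∈ End_K(A) : [r, u] ∈ D(A)_{i-1} for all r ∈ A}`, `D(A)_{-1} = 0`,
where `r ∈ A` is identified with the multiplication operator `Algebra.lmul K A r`. -/
def DO (K A : Type*) [CommSemiring K] [CommRing A] [Algebra K A] :
    ℕ → Set (Module.End K A)
  | 0 => {u | ∀ r : A, Algebra.lmul K A r * u = u * Algebra.lmul K A r}
  | i + 1 => {u | ∀ r : A, Algebra.lmul K A r * u - u * Algebra.lmul K A r ∈ DO K A i}

lemma lmul_app {K A : Type*} [CommSemiring K] [CommRing A] [Algebra K A] (r x : A) :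
    Algebra.lmul K A r x = r * x := by
  simp [Algebra.coe_lmul_eq_mul]

/-- A differential operator of order `0` is multiplication by its value at `1`. -/
lemma DO0_eq {K A : Type*} [CommSemiring K] [CommRing A] [Algebra K A]
    (u : Module.End K A) (h : ∀ r : A, Algebra.lmul K A r * u = u * Algebra.lmul K A r) :
    u = Algebra.lmul K A (u 1) := by
  ext r
  have := congrArg (fun f : Module.End K A => f 1) (h r)
  simp only [Module.End.mul_apply, lmul_app, mul_one] at this ⊢
  rw [← this]; exact mul_comm r (u 1)

/-- Let `A` be a commutative `K`-algebra, `R` a subalgebra of `D(A)` containing `A` and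
`R_i = R ∩ D(A)_i`.  If `𝔞` is a nonzero two-sided ideal of `R` then `𝔞₀ = 𝔞 ∩ A` is a
nonzero ideal of `A` such that `[R_1, 𝔞₀] ⊆ 𝔞₀` and `R𝔞₀R ∩ A = 𝔞₀`; moreover
`[R_1, 𝔞₀] ⊆ 𝔞₀` is equivalent to `[D_R, 𝔞₀] ⊆ 𝔞₀` where `D_R = R_1 ∩ Der_K(A)`. -/
theorem ideal_of_subalgebra_of_differential_operators
    {K A : Type*} [Field K] [CommRing A] [Algebra K A]
    (R : Subalgebra K (Module.End K A))
    (hRD : (R : Set (Module.End K A)) ⊆ ⋃ i, DO K A i)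
    (hAR : ∀ r : A, Algebra.lmul K A r ∈ R)
    -- `𝔞` is a nonzero two-sided ideal of `R`:
    (𝔞 : Set (Module.End K A)) (h_sub : 𝔞 ⊆ (R : Set (Module.End K A)))
    (h0 : (0 : Module.End K A) ∈ 𝔞)
    (hadd : ∀ x ∈ 𝔞, ∀ y ∈ 𝔞, x + y ∈ 𝔞) (hneg : ∀ x ∈ 𝔞, -x ∈ 𝔞)
    (habs : ∀ u ∈ R, ∀ x ∈ 𝔞, u * x ∈ 𝔞 ∧ x * u ∈ 𝔞)
    (hnz : ∃ x ∈ 𝔞, x ≠ 0)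
    -- `𝔞₀ = 𝔞 ∩ A`, as a set of elements of `A`:
    (𝔞₀ : Set A) (h𝔞₀ : 𝔞₀ = {r : A | Algebra.lmul K A r ∈ 𝔞}) :
    -- `𝔞₀` is a nonzero ideal of `A`:
    (∃ J : Ideal A, (J : Set A) = 𝔞₀ ∧ J ≠ ⊥) ∧
    -- `[R_1, 𝔞₀] ⊆ 𝔞₀`:
    (∀ u ∈ (R : Set (Module.End K A)) ∩ DO K A 1, ∀ r ∈ 𝔞₀,
      ∃ s ∈ 𝔞₀, u * Algebra.lmul K A r - Algebra.lmul K A r * u = Algebra.lmul K A s) ∧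
    -- `R𝔞₀R ∩ A = 𝔞₀`:
    {r : A | Algebra.lmul K A r ∈ (AddSubgroup.closure
      {x : Module.End K A | ∃ u ∈ R, ∃ r ∈ 𝔞₀, ∃ v ∈ R, x = u * Algebra.lmul K A r * v} :
        AddSubgroup (Module.End K A))} = 𝔞₀ ∧
    -- the equivalence `[R_1, 𝔞₀] ⊆ 𝔞₀ ↔ [D_R, 𝔞₀] ⊆ 𝔞₀`:
    ((∀ u ∈ (R : Set (Module.End K A)) ∩ DO K A 1, ∀ r ∈ 𝔞₀,
      ∃ s ∈ 𝔞₀, u * Algebra.lmul K A r - Algebra.lmul K A r * u = Algebra.lmul K A s) ↔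
     (∀ δ ∈ (R : Set (Module.End K A)) ∩ DO K A 1,
        (∀ x y : A, δ (x * y) = δ x * y + x * δ y) → ∀ r ∈ 𝔞₀, δ r ∈ 𝔞₀)) := by
  subst h𝔞₀
  -- operators of order `0` in `𝔞` give elements of `𝔞₀`
  have key0 : ∀ x ∈ 𝔞, (∀ r : A, Algebra.lmul K A r * x = x * Algebra.lmul K A r) →
      x 1 ∈ {r : A | Algebra.lmul K A r ∈ 𝔞} ∧ x = Algebra.lmul K A (x 1) := by
    intro x hx hcomm
    have hxe := DO0_eq x hcomm
    exact ⟨by rw [Set.mem_setOf_eq, ← hxe]; exact hx, hxe⟩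
  -- `𝔞₀` is nonzero
  have key : ∀ i : ℕ, ∀ x ∈ 𝔞, x ≠ 0 → x ∈ DO K A i →
      ∃ s : A, s ≠ 0 ∧ s ∈ {r : A | Algebra.lmul K A r ∈ 𝔞} := by
    intro i
    induction i with
    | zero =>
      intro x hx hx0 hxD
      obtain ⟨hs, he⟩ := key0 x hx hxD
      exact ⟨x 1, fun h => hx0 (by rw [he, h, map_zero]), hs⟩
    | succ i ih =>
      intro x hx hx0 hxD
      by_cases hc : ∀ r : A, Algebra.lmul K A r * x = x * Algebra.lmul K A r
      · obtain ⟨hs, he⟩ := key0 x hx hc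
        exact ⟨x 1, fun h => hx0 (by rw [he, h, map_zero]), hs⟩
      · push_neg at hc
        obtain ⟨r, hr⟩ := hc
        have hy𝔞 : Algebra.lmul K A r * x - x * Algebra.lmul K A r ∈ 𝔞 := by
          have h1 := (habs _ (hAR r) x hx).1
          have h2 := (habs _ (hAR r) x hx).2
          simpa [sub_eq_add_neg] using hadd _ h1 _ (hneg _ h2)
        have hyD : Algebra.lmul K A r * x - x * Algebra.lmul K A r ∈ DO K A i := hxD r
        have hy0 : Algebra.lmul K A r * x - x * Algebra.lmul K A r ≠ 0 :=
          fun h => hr (by rwa [← sub_eq_zero])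
        exact ih _ hy𝔞 hy0 hyD
  obtain ⟨x, hx𝔞, hx0⟩ := hnz
  obtain ⟨i, hxi⟩ := Set.mem_iUnion.mp (hRD (h_sub hx𝔞))
  obtain ⟨s₀, hs₀ne, hs₀⟩ := key i x hx𝔞 hx0 hxi
  -- the bracket condition `[R_1, 𝔞₀] ⊆ 𝔞₀`
  have bracket : ∀ u ∈ (R : Set (Module.End K A)) ∩ DO K A 1,
      ∀ r ∈ {r : A | Algebra.lmul K A r ∈ 𝔞},
      ∃ s ∈ {r : A | Algebra.lmul K A r ∈ 𝔞},
        u * Algebra.lmul K A r - Algebra.lmul K A r * u = Algebra.lmul K A s := by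
    rintro u ⟨huR, huD⟩ r hr
    have hrm : Algebra.lmul K A r ∈ 𝔞 := hr
    have hd : ∀ t : A, Algebra.lmul K A t * (Algebra.lmul K A r * u - u * Algebra.lmul K A r)
        = (Algebra.lmul K A r * u - u * Algebra.lmul K A r) * Algebra.lmul K A t := huD r
    have hc𝔞 : Algebra.lmul K A r * u - u * Algebra.lmul K A r ∈ 𝔞 := by
      have h1 := (habs u huR _ hrm).1
      have h2 := (habs u huR _ hrm).2
      simpa [sub_eq_add_neg] using hadd _ h2 _ (hneg _ h1)
    obtain ⟨hm, he⟩ := key0 _ hc𝔞 hd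
    refine ⟨-((Algebra.lmul K A r * u - u * Algebra.lmul K A r) 1), ?_, ?_⟩
    · rw [Set.mem_setOf_eq, map_neg]
      exact hneg _ (by rw [← he]; exact hc𝔞)
    · rw [map_neg, ← he, neg_sub]
  -- the additive subgroup generated by `R𝔞₀R` lies in `𝔞`
  let G : AddSubgroup (Module.End K A) :=
    { carrier := 𝔞
      zero_mem' := h0
      add_mem' := fun ha hb => hadd _ ha _ hb
      neg_mem' := fun ha => hneg _ ha }
  have hclos : AddSubgroup.closure
      {x : Module.End K A | ∃ u ∈ R, ∃ r ∈ {r : A | Algebra.lmul K A r ∈ 𝔞}, ∃ v ∈ R,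
        x = u * Algebra.lmul K A r * v} ≤ G := by
    rw [AddSubgroup.closure_le]
    rintro x ⟨u, hu, r, hr, v, hv, rfl⟩
    exact (habs v hv _ (habs u hu _ hr).1).2
  refine ⟨?_, bracket, ?_, ?_, fun _ => bracket⟩
  · -- `𝔞₀` is a nonzero ideal
    refine ⟨{ carrier := {r : A | Algebra.lmul K A r ∈ 𝔞}
              add_mem' := ?_
              zero_mem' := ?_
              smul_mem' := ?_ }, rfl, ?_⟩
    · intro a b ha hb
      simp only [Set.mem_setOf_eq, map_add] at *
      exact hadd _ ha _ hb
    · simp only [Set.mem_setOf_eq, map_zero]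
      exact h0
    · intro a r hr
      simp only [smul_eq_mul, Set.mem_setOf_eq, map_mul] at *
      exact (habs _ (hAR a) _ hr).1
    · intro hbot
      apply hs₀ne
      have : s₀ ∈ (⊥ : Ideal A) := hbot ▸ hs₀
      simpa using this
  · -- `R𝔞₀R ∩ A = 𝔞₀`
    ext r
    simp only [Set.mem_setOf_eq, SetLike.mem_coe]
    constructor
    · intro h
      exact hclos h
    · intro h
      exact AddSubgroup.subset_closure
        ⟨1, one_mem R, r, h, 1, one_mem R, by rw [mul_one, one_mul]⟩
  · -- forward direction of the equivalence
    intro h δ hδ hder r hr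
    obtain ⟨s, hs, heq⟩ := h δ hδ r hr
    have h1 : δ 1 = 0 := by
      have h11 := hder 1 1
      rw [mul_one, mul_one, one_mul] at h11
      exact (left_eq_add.mp h11)
    have happ := congrArg (fun f : Module.End K A => f 1) heq
    simp only [LinearMap.sub_apply, Module.End.mul_apply, lmul_app, mul_one, h1, mul_zero,
      sub_zero] at happ
    rw [Set.mem_setOf_eq]
    rw [show δ r = s from happ]
    exact hs
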